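/- Let k be a field and 𝒜 a finite-dimensional category. Then every simple object L of Mod-𝒜 is finitely generated (indeed a quotient of a representable module) and locally finite-dimensional, and for every fixed object x of 𝒜 there are only finitely many isomorphism classes of simple objects L of Mod-𝒜 with L(x) ≠ 0. -/

import Mathlib

open CategoryTheory CategoryTheory.Limits Opposite

section
variable (k : Type) [Field k]

/-- `k`-linearity on the opposite category. -/
instance oppositeLinear (C : Type*) [Category C] [Preadditive C] [CategoryTheory.Linear k C] :
    CategoryTheory.Linear k Cᵒᵖ where
  homModule X Y := Equiv.module k (opEquiv X Y)
  smul_comp _ _ _ _ _ _ :=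
    Quiver.Hom.unop_inj (CategoryTheory.Linear.comp_smul _ _ _ _ _ _)
  comp_smul _ _ _ _ _ _ :=
    Quiver.Hom.unop_inj (CategoryTheory.Linear.smul_comp _ _ _ _ _ _)

@[simp] lemma unop_ksmul {C : Type*} [Category C] [Preadditive C]
    [CategoryTheory.Linear k C] {X Y : Cᵒᵖ} (r : k) (f : X ⟶ Y) :
    (r • f).unop = r • f.unop := rfl

/-- The property of a functor between `k`-linear categories being `k`-linear
(in particular additive). -/
def IsKLinear {C D : Type*} [Category C] [Category D] [Preadditive C] [Preadditive D]
    [CategoryTheory.Linear k C] [CategoryTheory.Linear k D] (F : C ⥤ D) : Prop :=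
  ∃ h : F.Additive, Functor.Linear k F

/-- The category `Mod-A` of right modules over a small `k`-linear category `A`:
`k`-linear functors `Aᵒᵖ ⥤ ModuleCat k`. -/
abbrev RMod (A : Type) [SmallCategory A] [Preadditive A] [CategoryTheory.Linear k A] :=
  ObjectProperty.FullSubcategory (fun F : Aᵒᵖ ⥤ ModuleCat.{0} k => IsKLinear k F)

/-- The category `A-Mod` of left modules over a small `k`-linear category `A`:
`k`-linear functors `A ⥤ ModuleCat k`. -/
abbrev LMod (A : Type) [SmallCategory A] [Preadditive A] [CategoryTheory.Linear k A] :=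
  ObjectProperty.FullSubcategory (fun F : A ⥤ ModuleCat.{0} k => IsKLinear k F)

variable {k}

instance linYonObjLinear {C : Type*} [Category C] [Preadditive C] [CategoryTheory.Linear k C]
    (x : C) : ((linearYoneda k C).obj x).Linear k where
  map_smul f r := by
    ext (g : _ ⟶ x)
    exact CategoryTheory.Linear.smul_comp _ _ _ _ _ _

instance linCoyonObjLinear {C : Type*} [Category C] [Preadditive C] [CategoryTheory.Linear k C]
    (x : Cᵒᵖ) : ((linearCoyoneda k C).obj x).Linear k where
  map_smul f r := by
    ext (g : x.unop ⟶ _)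
    exact CategoryTheory.Linear.comp_smul _ _ _ _ _ _

variable (k)
variable (A : Type) [SmallCategory A] [Preadditive A] [CategoryTheory.Linear k A]

/-- The representable right `A`-module `Hom_A(−, x)`. -/
def reprR (x : A) : RMod k A :=
  ⟨(linearYoneda k A).obj x, inferInstance, inferInstance⟩

/-- The representable left `A`-module `Hom_A(x, −)`. -/
def reprL (x : A) : LMod k A :=
  ⟨(linearCoyoneda k A).obj (op x), inferInstance, inferInstance⟩

/-- The underlying functor of a finite direct sum of representable right modules. -/
def sumReprRFunctor {n : ℕ} (x : Fin n → A) : Aᵒᵖ ⥤ ModuleCat.{0} k where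
  obj y := ModuleCat.of k (∀ i, y.unop ⟶ x i)
  map {y z} f := ModuleCat.ofHom
    (LinearMap.pi fun i =>
      (CategoryTheory.Linear.leftComp k (x i) f.unop).comp (LinearMap.proj i))
  map_id y := by
    apply ModuleCat.hom_ext; apply LinearMap.ext; intro g
    funext i
    simp
  map_comp f g := by
    apply ModuleCat.hom_ext; apply LinearMap.ext; intro h
    funext i
    simp

instance sumReprRFunctor_additive {n : ℕ} (x : Fin n → A) :
    (sumReprRFunctor k A x).Additive where
  map_add {y z f g} := by
    ext h
    funext i
    dsimp only [sumReprRFunctor]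
    erw [ModuleCat.hom_add]
    exact Preadditive.add_comp _ _ _ _ _ _

instance sumReprRFunctor_linear {n : ℕ} (x : Fin n → A) :
    (sumReprRFunctor k A x).Linear k where
  map_smul {y z} f r := by
    ext h
    funext i
    dsimp only [sumReprRFunctor]
    exact CategoryTheory.Linear.smul_comp _ _ _ _ _ _

/-- The finite direct sum of the representable right modules `Hom_A(−, x i)`. -/
def sumReprR {n : ℕ} (x : Fin n → A) : RMod k A :=
  ⟨sumReprRFunctor k A x, inferInstance, inferInstance⟩

/-- A right module is finitely generated if it admits an epimorphism from a finite
direct sum of representable modules. -/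
def RMod.IsFG (V : RMod k A) : Prop :=
  ∃ (n : ℕ) (x : Fin n → A) (p : sumReprR k A x ⟶ V), Epi p

/-- A right module is locally finite-dimensional if each of its values is a
finite-dimensional vector space. -/
def RMod.IsLFD (V : RMod k A) : Prop :=
  ∀ x : A, FiniteDimensional k (V.obj.obj (op x))

/-!
A nonzero `v ∈ L(x)` gives a nonzero morphism `Hom(-, x) ⟶ L`, `g ↦ L(g) v`, which is pointwise
surjective because its image is a nonzero subobject of the simple module `L`. This gives finite
generation, and local finite-dimensionality since the `Hom(y, x)` are finite-dimensional.
The same surjectivity makes `L(x)` a simple module over the finite-dimensional algebra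
`End (op x)`, and `L(x)` determines `L`: the kernel of `g ↦ L(g) v` depends only on the
`End (op x)`-action on `v`.
A ring of finite length has only finitely many simple modules up to isomorphism.
-/

universe u v w

theorem IsFiniteLength.exists_fin_family_of_simple_target {R : Type u} [Ring R] {M : Type v}
    [AddCommGroup M] [Module R M] (hM : IsFiniteLength R M) :
    ∃ (n : ℕ) (Ms : Fin n → ModuleCat.{v} R), ∀ (N : Type w) [AddCommGroup N] [Module R N]
      [IsSimpleModule R N] (f : M →ₗ[R] N), f ≠ 0 → ∃ i, Nonempty (N ≃ₗ[R] Ms i) := by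
  induction hM with
  | of_subsingleton =>
    refine ⟨0, Fin.elim0, fun N _ _ _ f hf => absurd ?_ hf⟩
    ext m
    rw [Subsingleton.elim m 0, map_zero, LinearMap.zero_apply]
  | @of_simple_quotient M _ _ N₀ _ _ ih =>
    obtain ⟨n, Ms, hMs⟩ := ih
    refine ⟨n + 1, Fin.cons (ModuleCat.of R (M ⧸ N₀)) Ms, fun N _ _ _ f hf => ?_⟩
    by_cases h0 : f.comp N₀.subtype = 0
    · have hle : N₀ ≤ LinearMap.ker f := fun m hm => LinearMap.congr_fun h0 ⟨m, hm⟩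
      have hg : N₀.liftQ f hle ≠ 0 := fun hz => hf <| by
        rw [← Submodule.liftQ_mkQ N₀ f hle, hz, LinearMap.zero_comp]
      exact ⟨0, ⟨(LinearEquiv.ofBijective _ (LinearMap.bijective_of_ne_zero hg)).symm⟩⟩
    · obtain ⟨i, hi⟩ := hMs N _ h0
      exact ⟨i.succ, hi⟩

theorem IsFiniteLength.exists_fin_family_simpleModule {R : Type u} [Ring R]
    (hR : IsFiniteLength R R) :
    ∃ (n : ℕ) (Ms : Fin n → ModuleCat.{u} R), ∀ (N : Type w) [AddCommGroup N] [Module R N]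
      [IsSimpleModule R N], ∃ i, Nonempty (N ≃ₗ[R] Ms i) := by
  obtain ⟨n, Ms, hMs⟩ := hR.exists_fin_family_of_simple_target
  refine ⟨n, Ms, fun N _ _ _ => ?_⟩
  have := IsSimpleModule.nontrivial R N
  obtain ⟨v, hv⟩ := exists_ne (0 : N)
  refine hMs N (LinearMap.toSpanSingleton R N v) fun h => hv ?_
  simpa using LinearMap.congr_fun h 1

theorem exists_fin_representatives {α ι : Type*} [Finite ι] (c : α → ι → Prop)
    (r : α → α → Prop) (hr : ∀ a b i, c a i → c b i → r a b) :
    ∃ (m : ℕ) (f : Fin m → α), (∀ j, ∃ i, c (f j) i) ∧ ∀ a i, c a i → ∃ j, r a (f j) := by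
  let T := {i : ι // ∃ a, c a i}
  let e := Finite.equivFin T
  refine ⟨Nat.card T, fun j => (e.symm j).2.choose, fun j => ⟨_, (e.symm j).2.choose_spec⟩,
    fun a i hai => ⟨e ⟨i, a, hai⟩, ?_⟩⟩
  simp only [Equiv.symm_apply_apply]
  exact hr a _ i hai (Exists.choose_spec (p := (c · i)) _)

variable {k A}

instance Functor.moduleEndObj {C : Type*} [Category C] [Preadditive C] {R : Type*} [Ring R]
    (F : C ⥤ ModuleCat R) [F.Additive] (X : C) : Module (End X) (F.obj X) where
  smul e v := F.map e v
  one_smul v := by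
    change F.map (𝟙 X) v = v
    simp
  mul_smul e e' v := by
    change F.map (e' ≫ e) v = F.map e (F.map e' v)
    simp
  smul_zero e := map_zero (F.map e).hom
  smul_add e := map_add (F.map e).hom
  add_smul e e' v := by
    change F.map (e + e') v = F.map e v + F.map e' v
    rw [F.map_add]
    rfl
  zero_smul v := by
    change F.map (0 : X ⟶ X) v = 0
    simp

namespace RMod

instance additive (L : RMod k A) : L.obj.Additive := L.property.choose

instance linear (L : RMod k A) : L.obj.Linear k := L.property.choose_spec

theorem epi_of_surjective {V W : RMod k A} (f : V ⟶ W)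
    (hf : ∀ y, Function.Surjective (f.hom.app y)) : Epi f where
  left_cancellation g h hgh := by
    ext y w
    obtain ⟨u, rfl⟩ := hf y w
    exact congr(($hgh).hom.app y u)

theorem mono_of_injective {V W : RMod k A} (f : V ⟶ W)
    (hf : ∀ y, Function.Injective (f.hom.app y)) : Mono f where
  right_cancellation g h hgh := by
    ext y w
    exact hf y congr(($hgh).hom.app y w)

def homOfElem (L : RMod k A) {x : A} (v : L.obj.obj (op x)) : reprR k A x ⟶ L :=
  ObjectProperty.homMk
    { app y := ModuleCat.ofHom
        { toFun g := L.obj.map (show y.unop ⟶ x from g).op v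
          map_add' g g' := by simp [op_add]
          map_smul' r g := by
            rw [show (r • g).op = r • g.op from rfl, Functor.map_smul]
            rfl }
      naturality y z f := by
        ext (g : y.unop ⟶ x)
        change L.obj.map (f.unop ≫ g).op v = L.obj.map f (L.obj.map g.op v)
        simp }

@[simp]
theorem homOfElem_app (L : RMod k A) {x : A} (v : L.obj.obj (op x)) {y : Aᵒᵖ} (g : y.unop ⟶ x) :
    (homOfElem L v).hom.app y g = L.obj.map g.op v := rfl

section Stable

variable (L : RMod k A) (S : ∀ y, Submodule k (L.obj.obj y))
  (hS : ∀ {y z : Aᵒᵖ} (f : y ⟶ z), ∀ v ∈ S y, L.obj.map f v ∈ S z)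

abbrev subOfStableFunctor : Aᵒᵖ ⥤ ModuleCat.{0} k where
  obj y := ModuleCat.of k (S y)
  map f := ModuleCat.ofHom ((L.obj.map f).hom.restrict (hS f))
  map_id y := by
    ext ⟨w, hw⟩
    exact congr(($(L.obj.map_id y)).hom w)
  map_comp f g := by
    ext ⟨w, hw⟩
    exact congr(($(L.obj.map_comp f g)).hom w)

abbrev subOfStable : RMod k A :=
  ⟨subOfStableFunctor L S hS,
    ⟨⟨fun {_ _ f g} => by
      ext ⟨w, hw⟩
      exact congr(($(L.obj.map_add (f := f) (g := g))).hom w)⟩,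
    ⟨fun {_ _} f r => by
      ext ⟨w, hw⟩
      exact congr(($(L.obj.map_smul r f)).hom w)⟩⟩⟩

def subOfStableι : subOfStable L S hS ⟶ L :=
  ObjectProperty.homMk
    { app y := ModuleCat.ofHom (S y).subtype
      naturality _ _ _ := rfl }

instance : Mono (subOfStableι L S hS) :=
  mono_of_injective _ fun y => (S y).injective_subtype

end Stable

theorem eq_top_of_stable (L : RMod k A) [Simple L] (S : ∀ y, Submodule k (L.obj.obj y))
    (hS : ∀ {y z : Aᵒᵖ} (f : y ⟶ z), ∀ v ∈ S y, L.obj.map f v ∈ S z) {y₀ : Aᵒᵖ}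
    {v : L.obj.obj y₀} (hv : v ∈ S y₀) (hv0 : v ≠ 0) (y : Aᵒᵖ) : S y = ⊤ := by
  have hne : subOfStableι L S hS ≠ 0 := fun h => hv0 congr(($h).hom.app y₀ ⟨v, hv⟩)
  have := (Simple.mono_isIso_iff_nonzero _).mpr hne
  refine eq_top_iff.mpr fun w _ => ?_
  have hw : (subOfStableι L S hS).hom.app y ((inv (subOfStableι L S hS)).hom.app y w) = w :=
    congr((($(IsIso.inv_hom_id (subOfStableι L S hS))).hom.app y w))
  rw [← hw]
  exact ((inv (subOfStableι L S hS)).hom.app y w).2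

theorem exists_ne_zero (L : RMod k A) [Simple L] : ∃ (x : A) (v : L.obj.obj (op x)), v ≠ 0 := by
  by_contra! h
  exact id_nonzero L (by ext y w; exact h y.unop w)

theorem surjective_app_of_ne_zero {V L : RMod k A} [Simple L] (p : V ⟶ L) (hp : p ≠ 0)
    (y : Aᵒᵖ) : Function.Surjective (p.hom.app y) := by
  obtain ⟨y₀, u, hu⟩ : ∃ y₀ u, p.hom.app y₀ u ≠ 0 := by
    by_contra! h
    exact hp (by ext y u; exact h y u)
  have hS : ∀ {y z : Aᵒᵖ} (f : y ⟶ z), ∀ w ∈ LinearMap.range (p.hom.app y).hom,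
      L.obj.map f w ∈ LinearMap.range (p.hom.app z).hom := by
    rintro y z f _ ⟨u, rfl⟩
    exact ⟨V.obj.map f u, NatTrans.naturality_apply p.hom f u⟩
  exact LinearMap.range_eq_top.mp (eq_top_of_stable L _ hS ⟨u, rfl⟩ hu y)

theorem homOfElem_ne_zero (L : RMod k A) {x : A} {v : L.obj.obj (op x)} (hv : v ≠ 0) :
    homOfElem L v ≠ 0 := by
  intro h
  apply hv
  rw [← L.obj.map_id_apply (op x) v, ← op_id, ← homOfElem_app, h]
  rfl

theorem homOfElem_surjective (L : RMod k A) [Simple L] {x : A} {v : L.obj.obj (op x)} (hv : v ≠ 0)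
    (y : Aᵒᵖ) : Function.Surjective ((homOfElem L v).hom.app y) :=
  surjective_app_of_ne_zero _ (homOfElem_ne_zero L hv) y

def sumReprRProj {n : ℕ} (x : Fin n → A) (i : Fin n) : sumReprR k A x ⟶ reprR k A (x i) :=
  ObjectProperty.homMk
    { app _ := ModuleCat.ofHom (LinearMap.proj i)
      naturality _ _ _ := rfl }

theorem isFG_of_surjective {x : A} {V : RMod k A} (p : reprR k A x ⟶ V)
    (hp : ∀ y, Function.Surjective (p.hom.app y)) : V.IsFG k A :=
  ⟨1, fun _ => x, sumReprRProj _ 0 ≫ p,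
    epi_of_surjective _ fun y => (hp y).comp (Function.surjective_eval 0)⟩

theorem isLFD_of_surjective {x : A} (hfd : ∀ y, FiniteDimensional k (y ⟶ x)) {V : RMod k A}
    (p : reprR k A x ⟶ V) (hp : ∀ y, Function.Surjective (p.hom.app y)) : V.IsLFD k A :=
  fun y =>
    have : Module.Finite k ((reprR k A x).obj.obj (op y)) := hfd y
    Module.Finite.of_surjective (p.hom.app (op y)).hom (hp (op y))

theorem isSimpleModule_end (L : RMod k A) [Simple L] (x : A) [Nontrivial (L.obj.obj (op x))] :
    IsSimpleModule (End (op x)) (L.obj.obj (op x)) where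
  eq_bot_or_eq_top N := by
    refine or_iff_not_imp_left.mpr fun hN => eq_top_iff.mpr fun w _ => ?_
    obtain ⟨v, hv, hv0⟩ := Submodule.exists_mem_ne_zero_of_ne_bot hN
    obtain ⟨g, rfl⟩ := homOfElem_surjective L hv0 (op x) w
    exact N.smul_mem (g.op : End (op x)) hv

theorem homOfElem_app_eq_zero_iff (L : RMod k A) [Simple L] {x : A} (v : L.obj.obj (op x))
    {y : Aᵒᵖ} (g : y.unop ⟶ x) :
    (homOfElem L v).hom.app y g = 0 ↔ ∀ h : x ⟶ y.unop, L.obj.map (h ≫ g).op v = 0 := by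
  simp only [homOfElem_app, op_comp, Functor.map_comp, ConcreteCategory.comp_apply]
  refine ⟨fun h0 h => by rw [h0, map_zero], fun hall => ?_⟩
  by_contra hw
  obtain ⟨(h : x ⟶ y.unop), hh⟩ := homOfElem_surjective L hw (op x) v
  rw [homOfElem_app, hall h] at hh
  exact hw (by rw [← hh, map_zero])

theorem nonempty_iso_of_surjective_of_ker_eq {P L L' : RMod k A} (p : P ⟶ L) (p' : P ⟶ L')
    (hp : ∀ y, Function.Surjective (p.hom.app y)) (hp' : ∀ y, Function.Surjective (p'.hom.app y))
    (hker : ∀ y u, p.hom.app y u = 0 ↔ p'.hom.app y u = 0) : Nonempty (L ≅ L') := by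
  let θ (y : Aᵒᵖ) : L.obj.obj y ≃ₗ[k] L'.obj.obj y :=
    ((p.hom.app y).hom.quotKerEquivOfSurjective (hp y)).symm ≪≫ₗ
      Submodule.quotEquivOfEq _ _ (by ext u; exact hker y u) ≪≫ₗ
      (p'.hom.app y).hom.quotKerEquivOfSurjective (hp' y)
  have hθ (y : Aᵒᵖ) (u : P.obj.obj y) : θ y (p.hom.app y u) = p'.hom.app y u := by
    simp [θ, LinearMap.quotKerEquivOfSurjective_apply_mk]
  refine ⟨ObjectProperty.isoMk _
    (NatIso.ofComponents (fun y => (θ y).toModuleIso) fun {y z} f => ?_)⟩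
  ext w
  obtain ⟨u, rfl⟩ := hp y w
  simp [hθ, ← NatTrans.naturality_apply]

theorem nonempty_iso_of_linearEquiv {L L' : RMod k A} [Simple L] [Simple L'] {x : A}
    [Nontrivial (L.obj.obj (op x))] (φ : L.obj.obj (op x) ≃ₗ[End (op x)] L'.obj.obj (op x)) :
    Nonempty (L ≅ L') := by
  obtain ⟨v, hv⟩ := exists_ne (0 : L.obj.obj (op x))
  have hφ (e : End (op x)) : L'.obj.map e (φ v) = φ (L.obj.map e v) := (φ.map_smul e v).symm
  refine nonempty_iso_of_surjective_of_ker_eq (homOfElem L v) (homOfElem L' (φ v))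
    (homOfElem_surjective L hv) (homOfElem_surjective L' (φ.map_ne_zero_iff.mpr hv))
    fun y (g : y.unop ⟶ x) => ?_
  rw [homOfElem_app_eq_zero_iff, homOfElem_app_eq_zero_iff]
  simp only [hφ, LinearEquiv.map_eq_zero_iff]

end RMod

theorem isFiniteLength_end (hfd : ∀ x y : A, FiniteDimensional k (x ⟶ y)) (x : A) :
    IsFiniteLength (End (op x)) (End (op x)) := by
  have : Module.Finite k (End (op x)) := by
    have := hfd x x
    exact Module.Finite.equiv (R := k) (M := x ⟶ x)
      { toFun g := g.op, invFun e := e.unop, map_add' _ _ := rfl, map_smul' _ _ := rfl }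
  have : IsScalarTower k (End (op x)) (End (op x)) := IsScalarTower.right
  have : IsArtinianRing (End (op x)) := IsArtinianRing.of_finite k _
  have : IsNoetherianRing (End (op x)) := isNoetherian_of_tower k inferInstance
  exact isFiniteLength_iff_isNoetherian_isArtinian.mpr ⟨inferInstance, inferInstance⟩

variable (k A)

theorem statement_13
    (hfd : ∀ x y : A, FiniteDimensional k (x ⟶ y)) :
    (∀ L : RMod k A, Simple L →
      (∃ (x : A) (p : reprR k A x ⟶ L), Epi p) ∧
      RMod.IsFG k A L ∧ RMod.IsLFD k A L) ∧
    (∀ x : A, ∃ (n : ℕ) (Ls : Fin n → RMod k A),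
      (∀ i, Simple (Ls i)) ∧
      ∀ L : RMod k A, Simple L → Nontrivial (L.obj.obj (op x)) →
        ∃ i, Nonempty (L ≅ Ls i)) := by
  refine ⟨fun L _ => ?_, fun x => ?_⟩
  · obtain ⟨x, v, hv⟩ := RMod.exists_ne_zero L
    have hp := RMod.homOfElem_surjective L hv
    exact ⟨⟨x, _, RMod.epi_of_surjective _ hp⟩, RMod.isFG_of_surjective _ hp,
      RMod.isLFD_of_surjective (fun y => hfd y x) _ hp⟩
  · obtain ⟨n, Ms, hMs⟩ := (isFiniteLength_end hfd x).exists_fin_family_simpleModule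
    obtain ⟨m, Ls, hLs, hcover⟩ := exists_fin_representatives
      (fun (L : RMod k A) i => Simple L ∧ Nontrivial (L.obj.obj (op x)) ∧
        Nonempty (L.obj.obj (op x) ≃ₗ[End (op x)] Ms i))
      (fun L L' => Nonempty (L ≅ L'))
      fun L L' i ⟨_, _, ⟨φ⟩⟩ ⟨_, _, ⟨φ'⟩⟩ => RMod.nonempty_iso_of_linearEquiv (φ.trans φ'.symm)
    refine ⟨m, Ls, fun j => (hLs j).elim fun _ h => h.1, fun L hL hx => ?_⟩
    have := RMod.isSimpleModule_end L x
    obtain ⟨i, hi⟩ := hMs (L.obj.obj (op x))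
    exact hcover L i ⟨hL, hx, hi⟩

end
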